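/- In the one-factor model X = αY + ε with α > 0 and ε independent of Y, if Var(Y | Y ∈ A_v) → ∞ as v → ∞ along a family of conditioning sets A_v, then the conditional correlation ρ_{A_v} of X and Y given Y ∈ A_v tends to 1. -/

import Mathlib

open MeasureTheory ProbabilityTheory Filter Real Set

/-- Expectation of `f` conditioned on the event `A`. -/
noncomputable def cExp {Ω : Type*} [MeasurableSpace Ω] (μ : Measure Ω) (A : Set Ω)
    (f : Ω → ℝ) : ℝ :=
  (∫ ω in A, f ω ∂μ) / (μ A).toReal

/-- Variance of `f` conditioned on the event `A`. -/
noncomputable def cVar {Ω : Type*} [MeasurableSpace Ω] (μ : Measure Ω) (A : Set Ω)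
    (f : Ω → ℝ) : ℝ :=
  cExp μ A (fun ω => (f ω) ^ 2) - (cExp μ A f) ^ 2

/-- Covariance of `f` and `g` conditioned on the event `A`. -/
noncomputable def cCov {Ω : Type*} [MeasurableSpace Ω] (μ : Measure Ω) (A : Set Ω)
    (f g : Ω → ℝ) : ℝ :=
  cExp μ A (fun ω => f ω * g ω) - cExp μ A f * cExp μ A g

/-- Correlation coefficient of `f` and `g` conditioned on the event `A`. -/
noncomputable def cCorr {Ω : Type*} [MeasurableSpace Ω] (μ : Measure Ω) (A : Set Ω)
    (f g : Ω → ℝ) : ℝ :=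
  cCov μ A f g / Real.sqrt (cVar μ A f * cVar μ A g)

/-- The standard normal cumulative distribution function `Φ`. -/
noncomputable def stdPhi (x : ℝ) : ℝ := ((gaussianReal 0 1) (Set.Iic x)).toReal

/-- The standard normal density `φ`. -/
noncomputable def stdphi (x : ℝ) : ℝ := Real.exp (-x ^ 2 / 2) / Real.sqrt (2 * Real.pi)

/-! Conditioning on `{Y ∈ A}` leaves `ε` untouched because `ε` is independent of `Y`, so given
`Y ∈ A` one still has `Cov(X, Y) = α V` and `Var X = α² V + σ_ε²` with `V = Var(Y | Y ∈ A)`.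
Hence `ρ_A = α V / √((α² V + σ_ε²) V)`, which tends to `1` as `V → ∞`. -/

section ConditionalMoments

variable {Ω : Type*} [MeasurableSpace Ω] {μ : Measure Ω} {s : Set Ω}

lemma cExp_add {f g : Ω → ℝ} (hf : IntegrableOn f s μ) (hg : IntegrableOn g s μ) :
    cExp μ s (fun ω => f ω + g ω) = cExp μ s f + cExp μ s g := by
  rw [cExp, integral_add hf hg, add_div, cExp, cExp]

lemma cExp_const_mul (c : ℝ) (f : Ω → ℝ) :
    cExp μ s (fun ω => c * f ω) = c * cExp μ s f := by
  rw [cExp, integral_const_mul, mul_div_assoc, cExp]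

lemma cExp_const [IsFiniteMeasure μ] (hs : μ s ≠ 0) (c : ℝ) :
    cExp μ s (fun _ => c) = c := by
  have : (μ s).toReal ≠ 0 := ENNReal.toReal_ne_zero.mpr ⟨hs, measure_ne_top μ s⟩
  rw [cExp, setIntegral_const, smul_eq_mul, measureReal_def, mul_div_cancel_left₀ c this]

end ConditionalMoments

namespace ProbabilityTheory

variable {Ω β γ : Type*} [MeasurableSpace Ω] [MeasurableSpace β] [MeasurableSpace γ]
  {μ : Measure Ω} {Y : Ω → β} {Z : Ω → γ} {B : Set β}

lemma IndepFun.setIntegral_preimage_mul (hind : IndepFun Y Z μ) (hY : AEMeasurable Y μ)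
    (hZ : AEMeasurable Z μ) (hB : MeasurableSet B) {f : β → ℝ} {g : γ → ℝ}
    (hf : Measurable f) (hg : Measurable g) :
    ∫ ω in Y ⁻¹' B, f (Y ω) * g (Z ω) ∂μ = (∫ ω in Y ⁻¹' B, f (Y ω) ∂μ) * ∫ ω, g (Z ω) ∂μ := by
  have hs : NullMeasurableSet (Y ⁻¹' B) μ := hY.nullMeasurableSet_preimage hB
  have hf' : Measurable (B.indicator f) := hf.indicator hB
  rw [← integral_indicator₀ hs, ← integral_indicator₀ hs]
  have hmul : (Y ⁻¹' B).indicator (fun ω => f (Y ω) * g (Z ω))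
      = fun ω => B.indicator f (Y ω) * g (Z ω) := by
    funext ω
    by_cases h : Y ω ∈ B <;> simp [Set.indicator, h]
  have hone : (Y ⁻¹' B).indicator (fun ω => f (Y ω)) = fun ω => B.indicator f (Y ω) := by
    funext ω
    by_cases h : Y ω ∈ B <;> simp [Set.indicator, h]
  rw [hmul, hone]
  exact (hind.comp hf' hg).integral_fun_mul_eq_mul_integral
    (hf'.comp_aemeasurable hY).aestronglyMeasurable (hg.comp_aemeasurable hZ).aestronglyMeasurable

lemma IndepFun.cExp_preimage_mul (hind : IndepFun Y Z μ) (hY : AEMeasurable Y μ)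
    (hZ : AEMeasurable Z μ) (hB : MeasurableSet B) {f : β → ℝ} {g : γ → ℝ}
    (hf : Measurable f) (hg : Measurable g) :
    cExp μ (Y ⁻¹' B) (fun ω => f (Y ω) * g (Z ω))
      = cExp μ (Y ⁻¹' B) (fun ω => f (Y ω)) * ∫ ω, g (Z ω) ∂μ := by
  rw [cExp, cExp, hind.setIntegral_preimage_mul hY hZ hB hf hg, mul_div_right_comm]

lemma IndepFun.cExp_preimage_comp_right [IsFiniteMeasure μ] (hind : IndepFun Y Z μ)
    (hY : AEMeasurable Y μ) (hZ : AEMeasurable Z μ) (hB : MeasurableSet B)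
    (hs : μ (Y ⁻¹' B) ≠ 0) {g : γ → ℝ} (hg : Measurable g) :
    cExp μ (Y ⁻¹' B) (fun ω => g (Z ω)) = ∫ ω, g (Z ω) ∂μ := by
  simpa [cExp_const hs] using
    hind.cExp_preimage_mul hY hZ hB (f := fun _ => (1 : ℝ)) measurable_const hg

end ProbabilityTheory

section FactorModel

variable {Ω : Type*} [MeasurableSpace Ω] {P : Measure Ω} {Y ε : Ω → ℝ} {B : Set ℝ}

lemma cCov_factorModel [IsFiniteMeasure P] (hind : IndepFun Y ε P) (hY2 : MemLp Y 2 P)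
    (hε : Integrable ε P) (hB : MeasurableSet B) (hs : P (Y ⁻¹' B) ≠ 0) (α : ℝ) :
    cCov P (Y ⁻¹' B) (fun ω => α * Y ω + ε ω) Y = α * cVar P (Y ⁻¹' B) Y := by
  have hY : AEMeasurable Y P := hY2.aestronglyMeasurable.aemeasurable
  have hYε : cExp P (Y ⁻¹' B) (fun ω => Y ω * ε ω) = cExp P (Y ⁻¹' B) Y * ∫ ω, ε ω ∂P :=
    hind.cExp_preimage_mul hY hε.aemeasurable hB measurable_id measurable_id
  have hεs : cExp P (Y ⁻¹' B) ε = ∫ ω, ε ω ∂P :=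
    hind.cExp_preimage_comp_right hY hε.aemeasurable hB hs measurable_id
  have hXY : (fun ω => (α * Y ω + ε ω) * Y ω) = fun ω => α * Y ω ^ 2 + Y ω * ε ω := by
    funext ω; ring
  rw [cCov, cVar, hXY, cExp_add, cExp_add, cExp_const_mul, cExp_const_mul, hεs, hYε]
  · ring
  · exact ((hY2.integrable one_le_two).const_mul α).integrableOn
  · exact hε.integrableOn
  · exact (hY2.integrable_sq.const_mul α).integrableOn
  · exact (hind.integrable_mul (hY2.integrable one_le_two) hε).integrableOn

lemma cVar_factorModel [IsProbabilityMeasure P] (hind : IndepFun Y ε P) (hY2 : MemLp Y 2 P)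
    (hε2 : MemLp ε 2 P) (hB : MeasurableSet B) (hs : P (Y ⁻¹' B) ≠ 0) (α : ℝ) :
    cVar P (Y ⁻¹' B) (fun ω => α * Y ω + ε ω) = α ^ 2 * cVar P (Y ⁻¹' B) Y + variance ε P := by
  have hY : AEMeasurable Y P := hY2.aestronglyMeasurable.aemeasurable
  have hε : AEMeasurable ε P := hε2.aestronglyMeasurable.aemeasurable
  have hYint : Integrable Y P := hY2.integrable one_le_two
  have hεint : Integrable ε P := hε2.integrable one_le_two
  have hYεint : Integrable (fun ω => Y ω * ε ω) P := hind.integrable_mul hYint hεint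
  have hYε : cExp P (Y ⁻¹' B) (fun ω => Y ω * ε ω) = cExp P (Y ⁻¹' B) Y * ∫ ω, ε ω ∂P :=
    hind.cExp_preimage_mul hY hε hB measurable_id measurable_id
  have hεs : cExp P (Y ⁻¹' B) ε = ∫ ω, ε ω ∂P :=
    hind.cExp_preimage_comp_right hY hε hB hs measurable_id
  have hε2s : cExp P (Y ⁻¹' B) (fun ω => ε ω ^ 2) = ∫ ω, ε ω ^ 2 ∂P :=
    hind.cExp_preimage_comp_right hY hε hB hs (measurable_id.pow_const 2)
  have hX2 : (fun ω => (α * Y ω + ε ω) ^ 2)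
      = fun ω => (α ^ 2 * Y ω ^ 2 + (2 * α) * (Y ω * ε ω)) + ε ω ^ 2 := by
    funext ω; ring
  rw [cVar, cVar, hX2, cExp_add, cExp_add, cExp_add, cExp_const_mul, cExp_const_mul,
    cExp_const_mul, hεs, hYε, hε2s, variance_eq_sub hε2]
  · simp only [Pi.pow_apply]
    ring
  · exact (hYint.const_mul α).integrableOn
  · exact hεint.integrableOn
  · exact (hY2.integrable_sq.const_mul _).integrableOn
  · exact (hYεint.const_mul _).integrableOn
  · exact ((hY2.integrable_sq.const_mul _).add (hYεint.const_mul _)).integrableOn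
  · exact hε2.integrable_sq.integrableOn

end FactorModel

lemma tendsto_mul_div_sqrt_atTop {α : ℝ} (hα : 0 < α) (c : ℝ) :
    Tendsto (fun V : ℝ => α * V / √((α ^ 2 * V + c) * V)) atTop (nhds 1) := by
  have hsqrt : √(α ^ 2 + 0) = α := by rw [add_zero, sqrt_sq hα.le]
  have hlim : Tendsto (fun V : ℝ => α / √(α ^ 2 + c / V)) atTop (nhds (α / √(α ^ 2 + 0))) :=
    tendsto_const_nhds.div
      ((tendsto_const_nhds.add (tendsto_const_nhds.div_atTop tendsto_id)).sqrt)
      (by rw [hsqrt]; exact hα.ne')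
  rw [hsqrt, div_self hα.ne'] at hlim
  refine hlim.congr' ?_
  filter_upwards [eventually_gt_atTop 0] with V hV
  have hfac : (α ^ 2 * V + c) * V = (α ^ 2 + c / V) * V ^ 2 := by
    field_simp
  rw [hfac, sqrt_mul' _ (sq_nonneg V), sqrt_sq hV.le, mul_div_mul_right _ _ hV.ne']

theorem stmt8_general {Ω : Type*} [MeasurableSpace Ω] (P : Measure Ω) [IsProbabilityMeasure P]
    (Y ε : Ω → ℝ)
    (hY2 : MemLp Y 2 P) (hε2 : MemLp ε 2 P)
    (hind : IndepFun Y ε P)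
    (α : ℝ) (hα : 0 < α)
    (σε : ℝ) (hVarε : variance ε P = σε ^ 2)
    (X : Ω → ℝ) (hX : X = fun ω => α * Y ω + ε ω)
    (A : ℝ → Set ℝ) (hA : ∀ v, MeasurableSet (A v))
    (hpos : ∀ v, 0 < P (Y ⁻¹' A v))
    (hvar : Tendsto (fun v : ℝ => cVar P (Y ⁻¹' A v) Y) atTop atTop) :
    Tendsto (fun v : ℝ => cCorr P (Y ⁻¹' A v) X Y) atTop (nhds 1) := by
  have hcorr : ∀ v, cCorr P (Y ⁻¹' A v) X Y = α * cVar P (Y ⁻¹' A v) Y /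
      √((α ^ 2 * cVar P (Y ⁻¹' A v) Y + σε ^ 2) * cVar P (Y ⁻¹' A v) Y) := by
    intro v
    rw [cCorr, hX, cCov_factorModel hind hY2 (hε2.integrable one_le_two) (hA v) (hpos v).ne' α,
      cVar_factorModel hind hY2 hε2 (hA v) (hpos v).ne' α, hVarε]
  exact ((tendsto_mul_div_sqrt_atTop hα (σε ^ 2)).comp hvar).congr fun v => (hcorr v).symm

theorem stmt8 {Ω : Type*} [MeasurableSpace Ω] (P : Measure Ω) [IsProbabilityMeasure P]
    (Y ε : Ω → ℝ) (hY : Measurable Y) (hε : Measurable ε)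
    (hY2 : MemLp Y 2 P) (hε2 : MemLp ε 2 P)
    (hind : IndepFun Y ε P)
    (α : ℝ) (hα : 0 < α)
    (σε : ℝ) (hVarε : variance ε P = σε ^ 2)
    (X : Ω → ℝ) (hX : X = fun ω => α * Y ω + ε ω)
    (A : ℝ → Set ℝ) (hA : ∀ v, MeasurableSet (A v))
    (hpos : ∀ v, 0 < P (Y ⁻¹' A v))
    (hvar : Tendsto (fun v : ℝ => cVar P (Y ⁻¹' A v) Y) atTop atTop) :
    Tendsto (fun v : ℝ => cCorr P (Y ⁻¹' A v) X Y) atTop (nhds 1) :=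
  stmt8_general P Y ε hY2 hε2 hind α hα σε hVarε X hX A hA hpos hvar
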